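/- Let M = (E, ℐ) be a matroid of rank at most r+s that is representable over some field, and let 𝒴 be a collection of s-element independent sets of M. Then there exists a subfamily 𝒴̂ ⊆ 𝒴 with |𝒴̂| ≤ binom(r+s, s) that represents 𝒴 in M: for every independent set X of M, if some Y ∈ 𝒴 extends X in M, then some Y' ∈ 𝒴̂ extends X in M. -/

import Mathlib

open Finset

variable {V : Type}

/-- Total capacity of a terminal set: sum of degrees. -/
def capacity [Fintype V] (G : SimpleGraph V) [DecidableRel G.Adj] (T : Finset V) : ℕ :=
  ∑ t ∈ T, G.degree t

/-- `P` is a partition of the set `T` into nonempty parts. -/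
def IsPartitionOn (T : Set V) (P : Set (Set V)) : Prop :=
  (∀ p ∈ P, p.Nonempty ∧ p ⊆ T) ∧ ∀ t ∈ T, ∃! p, p ∈ P ∧ t ∈ p

/-- `X` is a multiway cut for the partition `P` in `G`: no component of `G - X`
contains terminals from two distinct parts. -/
def IsMultiwayCut (G : SimpleGraph V) (P : Set (Set V)) (X : Finset (Sym2 V)) : Prop :=
  ↑X ⊆ G.edgeSet ∧ ∀ u v : V, ∀ p ∈ P, ∀ q ∈ P, u ∈ p → v ∈ q →
    (G.deleteEdges ↑X).Reachable u v → p = q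

def IsMinMultiwayCut (G : SimpleGraph V) (P : Set (Set V)) (X : Finset (Sym2 V)) : Prop :=
  IsMultiwayCut G P X ∧ ∀ Y : Finset (Sym2 V), IsMultiwayCut G P Y → X.card ≤ Y.card

/-- `R` is a set of cut requests over `T`: unordered pairs of distinct terminals. -/
def CutRequests (T : Set V) (R : Set (Sym2 V)) : Prop :=
  ∀ r ∈ R, ¬ r.IsDiag ∧ ∀ v ∈ r, v ∈ T

/-- `X` is a multicut for the requests `R` in `G`. -/
def IsMulticut (G : SimpleGraph V) (R : Set (Sym2 V)) (X : Finset (Sym2 V)) : Prop :=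
  ↑X ⊆ G.edgeSet ∧ ∀ u v : V, s(u, v) ∈ R → ¬ (G.deleteEdges ↑X).Reachable u v

def IsMinMulticut (G : SimpleGraph V) (R : Set (Sym2 V)) (X : Finset (Sym2 V)) : Prop :=
  IsMulticut G R X ∧ ∀ Y : Finset (Sym2 V), IsMulticut G R Y → X.card ≤ Y.card

/-- An edge is essential for `(G,T)` if for some set of cut requests over `T`,
every minimum multicut contains it. -/
def Essential (G : SimpleGraph V) (T : Set V) (e : Sym2 V) : Prop :=
  ∃ R : Set (Sym2 V), CutRequests T R ∧ ∀ X : Finset (Sym2 V), IsMinMulticut G R X → e ∈ X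

/-- The edge boundary of `S`: edges with exactly one endpoint in `S`. -/
def edgeBoundary [Fintype V] [DecidableEq V] (G : SimpleGraph V) [DecidableRel G.Adj]
    (S : Finset V) : Finset (Sym2 V) :=
  G.edgeFinset.filter (fun e => ∃ u v : V, e = s(u, v) ∧ u ∈ S ∧ v ∉ S)

/-- `cap_T(S) = cap_G(T ∩ S) + δ_G(S)`. -/
def capT [Fintype V] [DecidableEq V] (G : SimpleGraph V) [DecidableRel G.Adj]
    (T S : Finset V) : ℕ :=
  capacity G (T ∩ S) + (edgeBoundary G S).card

/-- `X` is an `(A,B)`-edge cut in `G`. -/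
def IsEdgeCut (G : SimpleGraph V) (A B : Finset V) (X : Finset (Sym2 V)) : Prop :=
  ↑X ⊆ G.edgeSet ∧ ∀ a ∈ A, ∀ b ∈ B, ¬ (G.deleteEdges ↑X).Reachable a b

def IsMinEdgeCut (G : SimpleGraph V) (A B : Finset V) (X : Finset (Sym2 V)) : Prop :=
  IsEdgeCut G A B X ∧ ∀ Y : Finset (Sym2 V), IsEdgeCut G A B Y → X.card ≤ Y.card


/-- The closed neighborhood `N_G[S]`. -/
def closedNbhd (G : SimpleGraph V) (S : Set V) : Set V :=
  S ∪ {v | ∃ u ∈ S, G.Adj u v}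

/-- The (exterior) open neighborhood `N_G(S)`. -/
def extNbhd [Fintype V] [DecidableEq V] (G : SimpleGraph V) [DecidableRel G.Adj]
    (S : Finset V) : Finset V :=
  Finset.univ.filter (fun v => v ∉ S ∧ ∃ u ∈ S, G.Adj u v)

/-- The graph `G_S`: the edges of `G` with at least one endpoint in `S`
(vertices outside `N_G[S]` are isolated). -/
def recGraph [DecidableEq V] (G : SimpleGraph V) (S : Finset V) : SimpleGraph V where
  Adj u v := G.Adj u v ∧ (u ∈ S ∨ v ∈ S)
  symm := by constructor; intro u v h; exact ⟨h.1.symm, h.2.symm⟩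
  loopless := by constructor; intro v h; exact (G.ne_of_adj h.1) rfl

instance [DecidableEq V] (G : SimpleGraph V) [DecidableRel G.Adj] (S : Finset V) :
    DecidableRel (recGraph G S).Adj :=
  fun u v => inferInstanceAs (Decidable (G.Adj u v ∧ (u ∈ S ∨ v ∈ S)))

/-- The terminal set `T(S) = (T ∩ S) ∪ N_G(S)` of the recursive instance at `S`. -/
def recTerminals [Fintype V] [DecidableEq V] (G : SimpleGraph V) [DecidableRel G.Adj]
    (T S : Finset V) : Finset V :=
  (T ∩ S) ∪ extNbhd G S

/-- An indexed partition `T = T_1 ∪ ... ∪ T_s` of `T` into nonempty disjoint parts. -/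
def IsIndexedPartition [DecidableEq V] (T : Finset V) {s : ℕ} (Tp : Fin s → Finset V) : Prop :=
  (∀ i, (Tp i).Nonempty) ∧ (∀ i j, i ≠ j → Disjoint (Tp i) (Tp j)) ∧
    Finset.univ.biUnion Tp = T

def IsMultiwayCutFam (G : SimpleGraph V) {s : ℕ} (Tp : Fin s → Finset V)
    (X : Finset (Sym2 V)) : Prop :=
  ↑X ⊆ G.edgeSet ∧ ∀ i j : Fin s, i ≠ j → ∀ u ∈ Tp i, ∀ v ∈ Tp j,
    ¬ (G.deleteEdges ↑X).Reachable u v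

/-- The set `E(T,V)` of edges incident to at least one terminal. -/
def terminalEdges [Fintype V] [DecidableEq V] (G : SimpleGraph V) [DecidableRel G.Adj]
    (T : Finset V) : Finset (Sym2 V) :=
  G.edgeFinset.filter (fun e => ∃ t ∈ T, t ∈ e)

/-- Independence of the columns indexed by the finite set `X` in the
linear representation `v`. -/
def FIndep (F : Type) [Field F] {W E : Type} [AddCommGroup W] [Module F W]
    (v : E → W) (X : Finset E) : Prop :=
  LinearIndependent F (fun x : {a // a ∈ X} => v x.1)


/-!
Encode a finite set `X` of columns by the exterior product `w X` of its vectors, taken in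
increasing order for some linear order on `E`. Then `w X ≠ 0` iff `X` is independent, and
`w X * w Y ≠ 0` iff `Y` extends `X`. The wedges `w Y` of `s`-sets lie in the image of
`⋀^s (span v)`, of dimension at most `binom(r+s, s)`, so at most that many members of `𝒴`
have wedges spanning those of all of `𝒴`. They represent `𝒴`: the linear map `y ↦ w X * y`
cannot vanish on a spanning set without vanishing on every `w Y`.
-/

section LinearAlgebra

open Module Submodule

variable {K V ι : Type*} [Field K] [AddCommGroup V] [Module K V]

theorem Finset.exists_subset_card_eq_finrank_subset_span (S : Finset ι) (w : ι → V) :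
    ∃ T ⊆ S, #T = finrank K (span K (w '' S)) ∧ w '' S ⊆ span K (w '' T) := by
  obtain ⟨T, hTS, -, hspan, hli⟩ :=
    exists_linearIndepOn_extension (linearIndepOn_empty K w) (Set.empty_subset (S : Set ι))
  lift T to Finset ι using S.finite_toSet.subset hTS
  refine ⟨T, Finset.coe_subset.mp hTS, ?_, hspan⟩
  have hle : span K (w '' S) = span K (w '' T) :=
    le_antisymm (span_le.mpr hspan) (span_mono (Set.image_mono hTS))
  rw [hle, Set.image_eq_range, finrank_span_eq_card hli]
  simp

theorem LinearMap.exists_mem_apply_ne_zero_of_subset_span {N : Type*} [AddCommGroup N]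
    [Module K N] (f : V →ₗ[K] N) {A B : Set V} (hAB : A ⊆ span K B) {a : V} (ha : a ∈ A)
    (hfa : f a ≠ 0) : ∃ b ∈ B, f b ≠ 0 := by
  by_contra! h
  exact hfa (span_le.mpr (fun b hb => LinearMap.mem_ker.mpr (h b hb)) (hAB ha))

end LinearAlgebra

namespace ExteriorAlgebra

open Module Submodule

variable {K M ι : Type*} [Field K] [AddCommGroup M] [Module K M]

theorem ιMulti_ne_zero_iff {n : ℕ} {u : Fin n → M} :
    ιMulti K n u ≠ 0 ↔ LinearIndependent K u := by
  refine ⟨fun h => not_imp_comm.mp (AlternatingMap.map_linearDependent _ u) h, fun hu => ?_⟩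
  have hid : ⇑((univ : Finset (Fin n)).orderEmbOfFin (card_fin n)) = id :=
    (orderEmbOfFin_unique _ (fun _ => mem_univ _) strictMono_id).symm
  have h := (exteriorPower.ιMulti_family_linearIndependent_field (n := n) hu).ne_zero
    ⟨univ, card_fin n⟩
  rw [ne_eq, ← Subtype.coe_inj, exteriorPower.ιMulti_family_apply_coe] at h
  simpa [ιMulti_family, Set.powersetCard.ofFinEmbEquiv_symm_apply, hid] using h

variable [LinearOrder ι] (K) (v : ι → M)

noncomputable def ιMultiFinset (X : Finset ι) : ExteriorAlgebra K M :=
  ιMulti_family K #X v ⟨X, Set.powersetCard.mem_iff.mpr rfl⟩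

variable {K v}

theorem ιMultiFinset_eq_ιMulti_family {n : ℕ} {X : Finset ι} (h : #X = n) :
    ιMultiFinset K v X = ιMulti_family K n v ⟨X, h⟩ := by
  subst h; rfl

theorem ιMulti_family_ne_zero_iff {n : ℕ} (s : Set.powersetCard ι n) :
    ιMulti_family K n v s ≠ 0 ↔ LinearIndepOn K v (s.val : Set ι) := by
  rw [ιMulti_family, ιMulti_ne_zero_iff, Set.powersetCard.ofFinEmbEquiv_symm_apply,
    LinearIndepOn, ← linearIndependent_equiv (s.val.orderIsoOfFin s.prop).toEquiv]
  rfl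

theorem ιMultiFinset_mul_ne_zero_iff [DecidableEq ι] {X Y : Finset ι} :
    ιMultiFinset K v X * ιMultiFinset K v Y ≠ 0 ↔
      Disjoint X Y ∧ LinearIndepOn K v (↑(X ∪ Y) : Set ι) := by
  by_cases hXY : Disjoint X Y
  · rw [ιMultiFinset, ιMultiFinset, ιMulti_family_mul_of_disjoint K v _ _ hXY,
      smul_ne_zero_iff_ne, ιMulti_family_ne_zero_iff, Set.powersetCard.coe_disjUnion,
      disjUnion_eq_union]
    exact (and_iff_right hXY).symm
  · rw [ιMultiFinset, ιMultiFinset, ιMulti_family_mul_of_not_disjoint K v _ _ hXY]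
    simp [hXY]

theorem span_range_ιMulti_family_eq_range (n : ℕ) (v : ι → M) :
    span K (Set.range (ιMulti_family K n v)) =
      LinearMap.range
        ((⋀[K]^n M).subtype ∘ₗ exteriorPower.map n (span K (Set.range v)).subtype) := by
  rw [LinearMap.range_comp, exteriorPower.ιMulti_family_span, map_span, ← Set.range_comp]
  rfl

theorem finrank_span_image_ιMultiFinset_le {n : ℕ} {𝒴 : Set (Finset ι)}
    (h𝒴 : ∀ Y ∈ 𝒴, #Y = n) [FiniteDimensional K (span K (Set.range v))] :
    finrank K (span K (ιMultiFinset K v '' 𝒴)) ≤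
      (finrank K (span K (Set.range v))).choose n := by
  have hle : span K (ιMultiFinset K v '' 𝒴) ≤ span K (Set.range (ιMulti_family K n v)) :=
    span_mono <| by
      rintro _ ⟨Y, hY, rfl⟩
      exact ⟨_, (ιMultiFinset_eq_ιMulti_family (h𝒴 Y hY)).symm⟩
  rw [span_range_ιMulti_family_eq_range] at hle
  rw [← exteriorPower.finrank_eq]
  exact (Submodule.finrank_mono hle).trans (LinearMap.finrank_range_le _)

end ExteriorAlgebra

/-- representative sets lemma.  Let `M` be a matroid of rank at
most `r+s`, representable over a field `F` via vectors `v : E → W`, and let `𝒴` be a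
collection of `s`-element independent sets.  Then some subfamily `𝒴' ⊆ 𝒴` with
`|𝒴'| ≤ binom(r+s, s)` represents `𝒴`: whenever some `Y ∈ 𝒴` extends an independent
set `X` (i.e. `X ∩ Y = ∅` and `X ∪ Y` is independent), some `Y' ∈ 𝒴'` does too. -/
theorem representative_sets_lemma
    (F : Type) [Field F] (W : Type) [AddCommGroup W] [Module F W]
    (E : Type) [Fintype E] [DecidableEq E] (v : E → W) (r s : ℕ)
    (hrank : Module.finrank F (Submodule.span F (Set.range v)) ≤ r + s)
    (𝒴 : Finset (Finset E))
    (h𝒴 : ∀ Y ∈ 𝒴, Y.card = s ∧ FIndep F v Y) :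
    ∃ 𝒴' ⊆ 𝒴, 𝒴'.card ≤ (r + s).choose s ∧
      ∀ X : Finset E, FIndep F v X →
        (∃ Y ∈ 𝒴, Disjoint X Y ∧ FIndep F v (X ∪ Y)) →
        (∃ Y' ∈ 𝒴', Disjoint X Y' ∧ FIndep F v (X ∪ Y')) := by
  let : LinearOrder E := LinearOrder.lift' _ (Fintype.equivFin E).injective
  have : FiniteDimensional F (Submodule.span F (Set.range v)) :=
    FiniteDimensional.span_of_finite F (Set.finite_range v)
  let w := ExteriorAlgebra.ιMultiFinset F v
  obtain ⟨𝒴', h𝒴'𝒴, hcard, hspan⟩ :=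
    𝒴.exists_subset_card_eq_finrank_subset_span (K := F) w
  refine ⟨𝒴', h𝒴'𝒴, ?_, ?_⟩
  · calc #𝒴' = Module.finrank F (Submodule.span F (w '' 𝒴)) := hcard
      _ ≤ (Module.finrank F (Submodule.span F (Set.range v))).choose s :=
        ExteriorAlgebra.finrank_span_image_ιMultiFinset_le fun Y hY => (h𝒴 Y hY).1
      _ ≤ (r + s).choose s := Nat.choose_le_choose s hrank
  · rintro X - ⟨Y, hY, hXY⟩
    obtain ⟨_, ⟨Y', hY', rfl⟩, hXY'⟩ :=
      (LinearMap.mulLeft F (w X)).exists_mem_apply_ne_zero_of_subset_span hspan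
        (Set.mem_image_of_mem w hY) (ExteriorAlgebra.ιMultiFinset_mul_ne_zero_iff.mpr hXY)
    exact ⟨Y', hY', ExteriorAlgebra.ιMultiFinset_mul_ne_zero_iff.mp hXY'⟩
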